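/- Let 𝔫 be the 5-dimensional real Lie algebra l₅,₉ (case A) with orthonormal basis {E₁,…,E₅} and non-zero brackets [E₁,E₂] = m·E₃ + s·E₄ + u·E₅, [E₁,E₃] = v·E₄, [E₂,E₃] = w·E₅, where m > 0, w > v > 0 and s, u ≥ 0. Then there exist no c ∈ ℝ and no derivation D of 𝔫 with Ric = c·Id + D; i.e. 𝔫 is never an algebraic Ricci soliton. -/

import Mathlib

/-!
Write `D = Ric - c • id`; off the diagonal `D` agrees with `Ric`. The derivation rule applied to
`[E₁,E₃] = v E₄` and `[E₂,E₃] = w E₅` forces `m v s = 0` and `m w u = 0`, so `s = u = 0`.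
The diagonal parts of the same two identities then give
`Ric₄₄ - Ric₁₁ = Ric₃₃ - c = Ric₅₅ - Ric₂₂`, which for this metric reads
`c = -(3v² + w²)/2 = -(v² + 3w²)/2`, i.e. `v² = w²`.
-/

open scoped BigOperators

namespace Nilsoliton13

noncomputable section

abbrev V : Type := Fin 5 → ℝ

/-- The orthonormal basis vectors E₁,…,E₅ (indexed 0,…,4). -/
def E (i : Fin 5) : V := Pi.single i 1

/-- The inner product making `E` an orthonormal basis. -/
def ip (x y : V) : ℝ := ∑ i, x i * y i

/-- `D` is a derivation of the bracket `br`. -/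
def IsDerivation (br : V → V → V) (D : V →ₗ[ℝ] V) : Prop :=
  ∀ X Y : V, D (br X Y) = br (D X) Y + br X (D Y)

/-- `Ric` is the Ricci operator of the nilpotent Lie group with left-invariant
metric determined by the bracket `br` and the orthonormal basis `E`. -/
def IsRicci (br : V → V → V) (Ric : V →ₗ[ℝ] V) : Prop :=
  ∀ X Y : V, ip (Ric X) Y =
      -(1/2) * (∑ i : Fin 5, ip (br X (E i)) (br Y (E i)))
      + (1/4) * (∑ i : Fin 5, ∑ j : Fin 5, ip (br (E i) (E j)) X * ip (br (E i) (E j)) Y)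

/-- The bracket of l₅,₉ (case A): [E₁,E₂] = m·E₃ + s·E₄ + u·E₅,
[E₁,E₃] = v·E₄, [E₂,E₃] = w·E₅. -/
def br (m s u v w : ℝ) (X Y : V) : V :=
  (m * (X 0 * Y 1 - X 1 * Y 0)) • E 2 + (s * (X 0 * Y 1 - X 1 * Y 0) + v * (X 0 * Y 2 - X 2 * Y 0)) • E 3 + (u * (X 0 * Y 1 - X 1 * Y 0) + w * (X 1 * Y 2 - X 2 * Y 1)) • E 4

lemma E_apply (i j : Fin 5) : E i j = if j = i then 1 else 0 := by
  simp [E, Pi.single_apply]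

lemma ip_E_right (x : V) (j : Fin 5) : ip x (E j) = x j := by
  simp [ip, E_apply]

def ricciMatrix (m s u v w : ℝ) : Matrix (Fin 5) (Fin 5) ℝ :=
  !![-(m^2 + s^2 + u^2 + v^2) / 2, 0, u * w / 2, 0, 0;
     0, -(m^2 + s^2 + u^2 + w^2) / 2, -(s * v) / 2, 0, 0;
     u * w / 2, -(s * v) / 2, (m^2 - v^2 - w^2) / 2, m * s / 2, m * u / 2;
     0, 0, m * s / 2, (s^2 + v^2) / 2, s * u / 2;
     0, 0, m * u / 2, s * u / 2, (u^2 + w^2) / 2]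

lemma IsRicci.apply_E {m s u v w : ℝ} {Ric : V →ₗ[ℝ] V} (hRic : IsRicci (br m s u v w) Ric)
    (i j : Fin 5) : Ric (E i) j = ricciMatrix m s u v w i j := by
  have h := hRic (E i) (E j)
  rw [ip_E_right] at h
  fin_cases i <;> fin_cases j <;>
    simp [ip, br, ricciMatrix, Fin.sum_univ_five, E_apply] at h ⊢ <;> linarith

section Derivation

variable {m s u v w : ℝ} {D : V →ₗ[ℝ] V}

lemma IsDerivation.apply_E0_E2 (hD : IsDerivation (br m s u v w) D) :
    v * D (E 3) 2 = m * D (E 2) 1 ∧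
      v * D (E 3) 3 = v * D (E 0) 0 + s * D (E 2) 1 + v * D (E 2) 2 := by
  have hbr : br m s u v w (E 0) (E 2) = v • E 3 := by
    funext k; simp [br, E_apply]
  have h := hD (E 0) (E 2)
  rw [hbr, map_smul] at h
  have h2 := congrFun h 2
  have h3 := congrFun h 3
  simp only [br, E_apply, Pi.add_apply, Pi.smul_apply, smul_eq_mul, Fin.reduceEq, ↓reduceIte]
    at h2 h3
  constructor <;> linarith

lemma IsDerivation.apply_E1_E2 (hD : IsDerivation (br m s u v w) D) :
    w * D (E 4) 2 = -(m * D (E 2) 0) ∧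
      w * D (E 4) 4 = w * D (E 1) 1 - u * D (E 2) 0 + w * D (E 2) 2 := by
  have hbr : br m s u v w (E 1) (E 2) = w • E 4 := by
    funext k; simp [br, E_apply]
  have h := hD (E 1) (E 2)
  rw [hbr, map_smul] at h
  have h2 := congrFun h 2
  have h4 := congrFun h 4
  simp only [br, E_apply, Pi.add_apply, Pi.smul_apply, smul_eq_mul, Fin.reduceEq, ↓reduceIte]
    at h2 h4
  constructor <;> linarith

end Derivation

theorem stmt13_general (m s u v w : ℝ) (hm : 0 < m) (hvw : w > v) (hv : 0 < v)
    (Ric : V →ₗ[ℝ] V) (hRic : IsRicci (br m s u v w) Ric) :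
    ¬ ∃ (c : ℝ) (D : V →ₗ[ℝ] V), IsDerivation (br m s u v w) D ∧
        Ric = c • (LinearMap.id : V →ₗ[ℝ] V) + D := by
  rintro ⟨c, D, hD, rfl⟩
  have hw : 0 < w := hv.trans hvw
  have hDE (i j : Fin 5) : D (E i) j = ricciMatrix m s u v w i j - c * E i j := by
    rw [← hRic.apply_E]; simp
  obtain ⟨h02, h03⟩ := hD.apply_E0_E2
  obtain ⟨h12, h14⟩ := hD.apply_E1_E2
  simp only [hDE, ricciMatrix, E_apply, Matrix.of_apply, Matrix.cons_val', Matrix.cons_val,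
    Matrix.cons_val_fin_one, Matrix.cons_val_one, Matrix.cons_val_zero, Fin.reduceEq, ↓reduceIte]
    at h02 h03 h12 h14
  have hs : s = 0 := by
    have : m * v * s = 0 := by linear_combination h02
    simpa [hm.ne', hv.ne'] using this
  have hu : u = 0 := by
    have : m * w * u = 0 := by linear_combination h12
    simpa [hm.ne', hw.ne'] using this
  subst hs hu
  have hcv : 2 * c = -(3 * v^2 + w^2) := mul_left_cancel₀ hv.ne' (by linear_combination 2 * h03)
  have hcw : 2 * c = -(v^2 + 3 * w^2) := mul_left_cancel₀ hw.ne' (by linear_combination 2 * h14)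
  nlinarith

theorem stmt13 (m s u v w : ℝ) (hm : 0 < m) (hvw : w > v) (hv : 0 < v) (hs : 0 ≤ s) (hu : 0 ≤ u)
    (Ric : V →ₗ[ℝ] V) (hRic : IsRicci (br m s u v w) Ric) :
    ¬ ∃ (c : ℝ) (D : V →ₗ[ℝ] V), IsDerivation (br m s u v w) D ∧
        Ric = c • (LinearMap.id : V →ₗ[ℝ] V) + D :=
  stmt13_general m s u v w hm hvw hv Ric hRic

end

end Nilsoliton13
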